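/- Let 𝒦 be a finite family of nonempty compact convex sets in ℝ^d. If every subfamily of size at most d + 1 can be touched by a ball of radius r (i.e., for each such subfamily there is a center within distance r of every member), then for every subframe the optimal touching radius of the whole family equals the maximum over its (d+1)-element subfamilies: inf_c max_{K ∈ 𝒦} dist(c, K) = max_{𝒮 ⊆ 𝒦, |𝒮| ≤ d+1} inf_c max_{K ∈ 𝒮} dist(c, K). -/
import Mathlib

open Metric

section helpers

variable {α : Type*}

lemma aux_biSup_eq_of_mem {S : Set α} (f : α → ℝ) {i : α} (hi : i ∈ S) :
    (⨆ _ : i ∈ S, f i) = f i := by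
  haveI : Nonempty (i ∈ S) := ⟨hi⟩
  exact ciSup_const

lemma aux_bddAbove {S : Set α} (hS : S.Finite) (f : α → ℝ) :
    BddAbove (Set.range fun i => ⨆ _ : i ∈ S, f i) := by
  have hsub : (Set.range fun i => ⨆ _ : i ∈ S, f i) ⊆ insert 0 (f '' S) := by
    rintro x ⟨i, rfl⟩
    by_cases h : i ∈ S
    · exact Set.mem_insert_iff.2 (Or.inr ⟨i, h, (aux_biSup_eq_of_mem f h).symm⟩)
    · haveI : IsEmpty (i ∈ S) := ⟨h⟩
      exact Set.mem_insert_iff.2 (Or.inl (Real.iSup_of_isEmpty _))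
  exact (((hS.image f).insert 0).bddAbove).mono hsub

lemma aux_le_biSup {S : Set α} (hS : S.Finite) (f : α → ℝ) {i : α} (hi : i ∈ S) :
    f i ≤ ⨆ j, ⨆ _ : j ∈ S, f j := by
  calc f i = ⨆ _ : i ∈ S, f i := (aux_biSup_eq_of_mem f hi).symm
    _ ≤ ⨆ j, ⨆ _ : j ∈ S, f j := le_ciSup (aux_bddAbove hS f) i

lemma aux_biSup_le {S : Set α} (f : α → ℝ) {a : ℝ} (ha : 0 ≤ a)
    (h : ∀ i ∈ S, f i ≤ a) : (⨆ i ∈ S, f i) ≤ a :=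
  Real.iSup_le (fun i => Real.iSup_le (fun hi => h i hi) ha) ha

end helpers

theorem helly_touching_ball {d : ℕ}
    (𝒦 : Finset (Set (EuclideanSpace ℝ (Fin d)))) (h𝒦 : 𝒦.Nonempty)
    (hne : ∀ K ∈ 𝒦, K.Nonempty) (hcpt : ∀ K ∈ 𝒦, IsCompact K)
    (hconv : ∀ K ∈ 𝒦, Convex ℝ K)
    (r : ℝ)
    (hsmall : ∀ 𝒮 : Finset (Set (EuclideanSpace ℝ (Fin d))), 𝒮 ⊆ 𝒦 →
      𝒮.card ≤ d + 1 → ∃ c : EuclideanSpace ℝ (Fin d),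
        ∀ K ∈ 𝒮, Metric.infDist c K ≤ r) :
    (⨅ c : EuclideanSpace ℝ (Fin d), ⨆ K ∈ 𝒦, Metric.infDist c K) =
    ⨆ 𝒮 ∈ {𝒮 : Finset (Set (EuclideanSpace ℝ (Fin d))) | 𝒮 ⊆ 𝒦 ∧ 𝒮.card ≤ d + 1},
      ⨅ c : EuclideanSpace ℝ (Fin d), ⨆ K ∈ 𝒮, Metric.infDist c K := by
  classical
  set S : Set (Finset (Set (EuclideanSpace ℝ (Fin d)))) := {𝒮 : Finset (Set (EuclideanSpace ℝ (Fin d))) | 𝒮 ⊆ 𝒦 ∧ 𝒮.card ≤ d + 1} with hS_def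
  have hSfin : S.Finite := by
    apply Set.Finite.subset (𝒦.powerset.finite_toSet)
    intro 𝒮 h𝒮
    simpa [Finset.mem_powerset] using h𝒮.1
  -- the optimal radius of a subfamily, as a function
  set f : Finset (Set (EuclideanSpace ℝ (Fin d))) → ℝ := fun 𝒮 => ⨅ c : EuclideanSpace ℝ (Fin d), ⨆ K ∈ 𝒮, Metric.infDist c K with hf_def
  have hsupnn : ∀ (𝒮 : Finset (Set (EuclideanSpace ℝ (Fin d)))) (c : EuclideanSpace ℝ (Fin d)), 0 ≤ ⨆ K ∈ 𝒮, Metric.infDist c K :=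
    fun 𝒮 c => Real.iSup_nonneg fun K => Real.iSup_nonneg fun _ => infDist_nonneg
  have hfnn : ∀ 𝒮 : Finset (Set (EuclideanSpace ℝ (Fin d))), 0 ≤ f 𝒮 := fun 𝒮 => le_ciInf fun c => hsupnn 𝒮 c
  have hbdd : ∀ 𝒮 : Finset (Set (EuclideanSpace ℝ (Fin d))),
      BddBelow (Set.range fun c : EuclideanSpace ℝ (Fin d) => ⨆ K ∈ 𝒮, Metric.infDist c K) := by
    intro 𝒮
    exact ⟨0, by rintro x ⟨c, rfl⟩; exact hsupnn 𝒮 c⟩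
  set R : ℝ := ⨆ 𝒮 ∈ S, f 𝒮 with hR_def
  have hRnn : 0 ≤ R := by
    have h0 : (∅ : Finset (Set (EuclideanSpace ℝ (Fin d)))) ∈ S := ⟨Finset.empty_subset _, by simp⟩
    have := aux_le_biSup hSfin f h0
    refine le_trans (hfnn ∅) this
  apply le_antisymm
  · -- hard direction, via Helly
    apply le_of_forall_gt_imp_ge_of_dense
    intro r' hr'
    have hr'0 : 0 ≤ r' := le_of_lt (lt_of_le_of_lt hRnn hr')
    set F : Set (EuclideanSpace ℝ (Fin d)) → Set (EuclideanSpace ℝ (Fin d)) := fun K => {c : EuclideanSpace ℝ (Fin d) | Metric.infDist c K ≤ r'} with hF_def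
    have hFeq : ∀ K ∈ 𝒦, F K = cthickening r' K := by
      intro K hK
      ext c
      simp only [hF_def, Set.mem_setOf_eq, mem_cthickening_iff]
      exact (ENNReal.le_ofReal_iff_toReal_le (infEdist_ne_top (hne K hK)) hr'0).symm
    have hinter : (⋂ K ∈ 𝒦, F K).Nonempty := by
      apply Convex.helly_theorem' (𝕜 := ℝ)
      · intro K hK
        rw [hFeq K hK]
        exact (hconv K hK).cthickening r'
      · intro I hI hcard
        rw [finrank_euclideanSpace_fin] at hcard
        have hIS : I ∈ S := ⟨hI, hcard⟩
        have hfI : f I < r' := lt_of_le_of_lt (aux_le_biSup hSfin f hIS) hr'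
        obtain ⟨c, hc⟩ := exists_lt_of_ciInf_lt hfI
        refine ⟨c, ?_⟩
        simp only [Set.mem_iInter]
        intro K hK
        have : Metric.infDist c K ≤ ⨆ K ∈ I, Metric.infDist c K :=
          aux_le_biSup (I.finite_toSet) (fun K => Metric.infDist c K) hK
        exact le_of_lt (lt_of_le_of_lt this hc)
    obtain ⟨c0, hc0⟩ := hinter
    simp only [Set.mem_iInter, hF_def, Set.mem_setOf_eq] at hc0
    calc (⨅ c : EuclideanSpace ℝ (Fin d), ⨆ K ∈ 𝒦, Metric.infDist c K)
        ≤ ⨆ K ∈ 𝒦, Metric.infDist c0 K := ciInf_le (hbdd 𝒦) c0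
      _ ≤ r' := aux_biSup_le _ hr'0 hc0
  · -- easy direction
    apply aux_biSup_le f (le_ciInf fun c => hsupnn 𝒦 c)
    intro 𝒮 h𝒮
    apply ciInf_mono (hbdd 𝒮)
    intro c
    apply aux_biSup_le _ (hsupnn 𝒦 c)
    intro K hK
    exact aux_le_biSup (𝒦.finite_toSet) (fun K => Metric.infDist c K) (h𝒮.1 hK)
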